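/- arXiv:math/0503731 — 7 statements merged into one kernel-verified Lean document; each statement's English description precedes it below -/
import Mathlib

section
/- The number of Castelnuovo functions of weight n equals the number of partitions of n into distinct parts. -/
/-- A Castelnuovo function: `s 0 = 1, s 1 = 2, …, s (σ-1) = σ` and
`s (σ-1) ≥ s σ ≥ s (σ+1) ≥ ⋯ ≥ 0` for some `σ ≥ 0`, finitely supported,
and vanishing in negative degrees. -/
def CastelnuovoZ (s : ℤ → ℤ) : Prop :=
  (∀ m, 0 ≤ s m) ∧ (∀ m, m < 0 → s m = 0) ∧ (∃ N : ℤ, ∀ m, N ≤ m → s m = 0) ∧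
  ∃ σ : ℕ, (∀ i : ℕ, i < σ → s i = i + 1) ∧ ∀ m : ℤ, (σ : ℤ) - 1 ≤ m → s (m + 1) ≤ s m

/-!
List the distinct parts of a partition as `d₀ > d₁ > ⋯ > d_{k-1}` (so `j`, the rank of `d_j`,
is the number of parts larger than it) and lay `d_j` out as the row of integers `[j, j + d_j)`.
Since `d_j ≥ k - j` every row reaches column `k - 1`, and since `j + d_j` is weakly decreasing
the rows end in weakly decreasing order. Hence the number of rows covering column `i` is `i + 1`
for `i < k` and weakly decreasing from `k - 1` on: a Castelnuovo function with `σ = k` and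
weight `∑ d_j`. Conversely, for a Castelnuovo function `s` the superlevel sets `{m | r < s m}`,
`r < σ`, are intervals `[r, r + t_r)` with `t_r` strictly decreasing, i.e. exactly the rows of
the parts `t_0 > ⋯ > t_{σ-1}`.
-/

open Finset

theorem Set.OrdConnected.eq_Ico_ncard {S : Set ℤ} (hS : S.OrdConnected) (hfin : S.Finite)
    {a : ℤ} (ha : IsLeast S a) : S = Set.Ico a (a + S.ncard) := by
  obtain ⟨b, hb, hmax⟩ := S.exists_max_image id hfin ⟨a, ha.1⟩
  have hIcc : S = Set.Icc a b :=
    Set.Subset.antisymm (fun m hm => ⟨ha.2 hm, hmax m hm⟩) (hS.out ha.1 hb)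
  rw [hIcc, ← Finset.coe_Icc, Set.ncard_coe_finset, Int.card_Icc, Finset.coe_Icc]
  ext m
  simp only [Set.mem_Icc, Set.mem_Ico]
  omega

structure IsCastelnuovo (s : ℤ → ℤ) (σ : ℕ) : Prop where
  nonneg : ∀ m, 0 ≤ s m
  eq_zero_of_neg : ∀ m < 0, s m = 0
  eventually_zero : ∃ N, ∀ m, N ≤ m → s m = 0
  stair : ∀ m : ℤ, 0 ≤ m → m < σ → s m = m + 1
  succ_le : ∀ m : ℤ, σ - 1 ≤ m → s (m + 1) ≤ s m

theorem castelnuovoZ_iff {s : ℤ → ℤ} : CastelnuovoZ s ↔ ∃ σ, IsCastelnuovo s σ := by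
  constructor
  · rintro ⟨hnonneg, hneg, hzero, σ, hstair, hsucc⟩
    refine ⟨σ, hnonneg, hneg, hzero, fun m h0 hm => ?_, hsucc⟩
    simpa [Int.toNat_of_nonneg h0] using hstair m.toNat (by omega)
  · rintro ⟨σ, hnonneg, hneg, hzero, hstair, hsucc⟩
    exact ⟨hnonneg, hneg, hzero, σ,
      fun i hi => hstair i i.cast_nonneg (by exact_mod_cast hi), hsucc⟩

namespace Castelnuovo

def rank (P : Finset ℕ) (d : ℕ) : ℕ := #{e ∈ P | d < e}

noncomputable def row (P : Finset ℕ) (d : ℕ) : Finset ℤ := Ico (rank P d : ℤ) (rank P d + d)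

noncomputable def ofParts (P : Finset ℕ) (i : ℤ) : ℤ := #{d ∈ P | i ∈ row P d}

variable {P : Finset ℕ}

theorem rank_antitone : Antitone (rank P) := fun _ _ hde =>
  card_le_card <| monotone_filter_right P fun _ _ h => hde.trans_lt h

theorem rank_strictAntiOn : StrictAntiOn (rank P) P := fun d _ e he hde =>
  card_lt_card <| (ssubset_iff_of_subset (monotone_filter_right P fun _ _ h => hde.trans h)).2
    ⟨e, mem_filter.2 ⟨mem_coe.1 he, hde⟩, by simp⟩

theorem rank_add_le_rank_add {d e : ℕ} (hde : d ≤ e) : rank P d + d ≤ rank P e + e := by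
  have : {x ∈ P | d < x} ⊆ {x ∈ P | e < x} ∪ Ioc d e := fun x hx => by
    simp only [mem_filter, mem_union, mem_Ioc] at hx ⊢
    rcases le_or_gt x e with h | h
    · exact Or.inr ⟨hx.2, h⟩
    · exact Or.inl ⟨hx.1, h⟩
  have := (card_le_card this).trans (card_union_le _ _)
  simp only [Nat.card_Ioc] at this
  simp only [rank]
  omega

theorem rank_lt_card {d : ℕ} (hd : d ∈ P) : rank P d < #P :=
  card_lt_card <| filter_ssubset.2 ⟨d, hd, lt_irrefl d⟩

theorem exists_rank_eq {i : ℕ} (hi : i < #P) : ∃ d ∈ P, rank P d = i := by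
  have : P.image (rank P) = range #P :=
    eq_of_subset_of_card_le (fun _ h => by
      obtain ⟨d, hd, rfl⟩ := mem_image.1 h
      exact mem_range.2 (rank_lt_card hd))
      (by rw [card_range, card_image_of_injOn rank_strictAntiOn.injOn])
  exact mem_image.1 (this ▸ mem_range.2 hi)

theorem card_filter_le_eq_rank_add_one {d : ℕ} (hd : d ∈ P) :
    #{e ∈ P | d ≤ e} = rank P d + 1 := by
  rw [rank, ← card_insert_of_notMem (s := {e ∈ P | d < e}) (a := d) (by simp)]
  congr 1
  ext e
  simp only [mem_filter, mem_insert]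
  grind

/-- The rows covering a column are those of the largest parts: if `i ∈ row P d` and `d ≤ e`,
then `i ∈ row P e`, because `rank P e ≤ rank P d` and `rank P d + d ≤ rank P e + e`. -/
theorem mem_row_iff {d : ℕ} (hd : d ∈ P) {i : ℤ} :
    i ∈ row P d ↔ (rank P d : ℤ) < ofParts P i := by
  simp only [ofParts, Nat.cast_lt]
  constructor
  · intro hi
    rw [← Nat.add_one_le_iff, ← card_filter_le_eq_rank_add_one hd]
    refine card_le_card (monotone_filter_right P fun e he hde => ?_)
    have := rank_antitone (P := P) hde
    have := rank_add_le_rank_add (P := P) hde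
    simp only [row, mem_Ico] at hi ⊢
    omega
  · intro hlt
    by_contra hi
    refine (card_le_card (monotone_filter_right P fun e he hie => ?_)).not_gt hlt
    simp only [row, mem_Ico] at hi hie
    by_contra! hed
    have := rank_antitone (P := P) hed
    have := rank_add_le_rank_add (P := P) hed
    omega

theorem ofParts_le_add_one {i : ℤ} (hi : 0 ≤ i) : ofParts P i ≤ i + 1 := by
  have : #{d ∈ P | i ∈ row P d} ≤ #(range (i.toNat + 1)) := by
    refine card_le_card_of_injOn (rank P) (fun d hd => ?_) (rank_strictAntiOn.injOn.mono ?_)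
    · simp only [mem_coe, mem_filter, row, mem_Ico, mem_range] at hd ⊢
      omega
    · exact fun d hd => (mem_filter.1 hd).1
  rw [card_range] at this
  rw [ofParts]
  omega

theorem ofParts_le_card (i : ℤ) : ofParts P i ≤ #P :=
  Nat.cast_le.2 (card_filter_le P _)

theorem row_subset {d : ℕ} (hd : d ∈ P) :
    row P d ⊆ Ico 0 ((#P + ∑ e ∈ P, e : ℕ) : ℤ) := by
  have := rank_lt_card hd
  have := single_le_sum (fun e _ => Nat.zero_le e) hd
  intro i hi
  simp only [row, mem_Ico] at hi ⊢
  omega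

theorem ofParts_eq_zero {i : ℤ} (hi : i ∉ Ico 0 ((#P + ∑ e ∈ P, e : ℕ) : ℤ)) :
    ofParts P i = 0 := by
  rw [ofParts, Nat.cast_eq_zero, card_eq_zero, filter_eq_empty_iff]
  exact fun d hd hid => hi (row_subset hd hid)

theorem isCastelnuovo_ofParts (hpos : ∀ d ∈ P, 0 < d) : IsCastelnuovo (ofParts P) #P where
  nonneg _ := Nat.cast_nonneg _
  eq_zero_of_neg m hm := ofParts_eq_zero (by simp [hm])
  eventually_zero :=
    ⟨(#P + ∑ e ∈ P, e : ℕ), fun m hm => ofParts_eq_zero (by simp only [mem_Ico]; omega)⟩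
  stair m hm hmP := by
    obtain ⟨d, hd, hdm⟩ := exists_rank_eq (P := P) (i := m.toNat) (by omega)
    have := (mem_row_iff hd (i := m)).1 (by simp [row, hdm, hpos d hd, hm])
    have := ofParts_le_add_one (P := P) hm
    omega
  succ_le m hm := by
    refine Nat.cast_le.2 (card_le_card (monotone_filter_right P fun d hd hmd => ?_))
    have := rank_lt_card hd
    simp only [row, mem_Ico] at hmd ⊢
    omega

theorem finsum_ofParts : ∑ᶠ m, ofParts P m = ∑ d ∈ P, (d : ℤ) := by
  set B : ℤ := ((#P + ∑ e ∈ P, e : ℕ) : ℤ)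
  rw [finsum_eq_sum_of_support_subset _ (s := Ico 0 B) fun m hm => by_contra fun h =>
    hm (ofParts_eq_zero h)]
  simp only [ofParts]
  rw [← Nat.cast_sum, ← Nat.cast_sum, Nat.cast_inj]
  refine (sum_card_bipartiteAbove_eq_sum_card_bipartiteBelow (fun m d => m ∈ row P d)).trans
    (sum_congr rfl fun d hd => ?_)
  rw [bipartiteBelow, filter_mem_eq_inter, inter_eq_right.2 (row_subset hd), row, Int.card_Ico]
  omega

noncomputable def levelWidth (s : ℤ → ℤ) (r : ℕ) : ℕ := {m : ℤ | (r : ℤ) < s m}.ncard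

theorem levelWidth_ofParts_rank {d : ℕ} (hd : d ∈ P) :
    levelWidth (ofParts P) (rank P d) = d := by
  have : {m : ℤ | (rank P d : ℤ) < ofParts P m} = ↑(row P d) := by
    ext m
    exact (mem_row_iff hd).symm
  rw [levelWidth, this, Set.ncard_coe_finset, row, Int.card_Ico]
  omega

theorem levelWidth_ofParts_mem {r : ℕ} (hr : 0 < levelWidth (ofParts P) r) :
    levelWidth (ofParts P) r ∈ P := by
  obtain ⟨m, hm⟩ := Set.nonempty_of_ncard_ne_zero hr.ne'
  obtain ⟨d, hd, rfl⟩ := exists_rank_eq (P := P) (i := r)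
    (by have := ofParts_le_card (P := P) m; exact_mod_cast hm.trans_le this)
  rwa [levelWidth_ofParts_rank hd]

theorem ofParts_injOn : Set.InjOn ofParts {P : Finset ℕ | ∀ d ∈ P, 0 < d} := by
  suffices h : ∀ P Q : Finset ℕ, (∀ d ∈ P, 0 < d) → ofParts P = ofParts Q → P ⊆ Q from
    fun P hP Q hQ hPQ => (h P Q hP hPQ).antisymm (h Q P hQ hPQ.symm)
  intro P Q hP hPQ d hd
  have hwidth := levelWidth_ofParts_rank hd
  rw [hPQ] at hwidth
  rw [← hwidth]
  exact levelWidth_ofParts_mem (by rw [hwidth]; exact hP d hd)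

noncomputable def parts (s : ℤ → ℤ) (σ : ℕ) : Finset ℕ := (range σ).image (levelWidth s)

end Castelnuovo

namespace IsCastelnuovo

open Castelnuovo

variable {s : ℤ → ℤ} {σ : ℕ}

theorem antitoneOn (hs : IsCastelnuovo s σ) : AntitoneOn s (Set.Ici ((σ : ℤ) - 1)) :=
  antitoneOn_of_add_one_le Set.ordConnected_Ici fun m _ hm _ => hs.succ_le m hm

theorem apply_le (hs : IsCastelnuovo s σ) (m : ℤ) : s m ≤ σ := by
  have apex : s (σ - 1) = σ := by
    rcases Nat.eq_zero_or_pos σ with h | h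
    · simp [h, hs.eq_zero_of_neg]
    · rw [hs.stair _ (by omega) (by omega)]
      ring
  rcases lt_or_ge m 0 with hm | hm
  · simp [hs.eq_zero_of_neg m hm]
  rcases lt_or_ge m σ with hmσ | hmσ
  · rw [hs.stair m hm hmσ]
    omega
  · exact apex ▸ hs.antitoneOn (by simp) (by simp; omega) (by omega)

theorem level_eq_Ico (hs : IsCastelnuovo s σ) {r : ℕ} (hr : r < σ) :
    {m : ℤ | (r : ℤ) < s m} = Set.Ico (r : ℤ) (r + levelWidth s r) := by
  have hge : ∀ m, (r : ℤ) < s m → (r : ℤ) ≤ m := by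
    intro m hm
    by_contra! hlt
    rcases lt_or_ge m 0 with h0 | h0
    · rw [hs.eq_zero_of_neg m h0] at hm
      omega
    · rw [hs.stair m h0 (by omega)] at hm
      omega
  refine Set.OrdConnected.eq_Ico_ncard ⟨fun x hx z hz y ⟨hxy, hyz⟩ => ?_⟩ ?_ ⟨?_, hge⟩
  · rcases lt_or_ge y σ with hyσ | hyσ
    · have := hge x hx
      show (r : ℤ) < s y
      rw [hs.stair y (by omega) hyσ]
      omega
    · exact lt_of_lt_of_le hz (hs.antitoneOn (by simp; omega) (by simp; omega) hyz)
  · obtain ⟨N, hN⟩ := hs.eventually_zero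
    refine (Set.finite_Ico 0 N).subset fun m (hm : (r : ℤ) < s m) => ⟨?_, ?_⟩ <;>
      by_contra! h
    · rw [hs.eq_zero_of_neg m h] at hm
      omega
    · rw [hN m h] at hm
      omega
  · simp [hs.stair r r.cast_nonneg (by exact_mod_cast hr)]

theorem levelWidth_pos (hs : IsCastelnuovo s σ) {r : ℕ} (hr : r < σ) :
    0 < levelWidth s r := by
  have hr_mem : (r : ℤ) ∈ {m : ℤ | (r : ℤ) < s m} := by
    simp [hs.stair r r.cast_nonneg (by exact_mod_cast hr)]
  rw [hs.level_eq_Ico hr] at hr_mem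
  simpa using hr_mem.2

theorem levelWidth_strictAntiOn (hs : IsCastelnuovo s σ) :
    StrictAntiOn (levelWidth s) (Set.Iio σ) := by
  intro r hr r' hr' hrr'
  have hsub : {m : ℤ | (r' : ℤ) < s m} ⊆ {m : ℤ | (r : ℤ) < s m} :=
    fun m (hm : (r' : ℤ) < s m) => show (r : ℤ) < s m by omega
  have := hs.levelWidth_pos hr'
  rw [hs.level_eq_Ico hr, hs.level_eq_Ico hr', Set.Ico_subset_Ico_iff (by omega)] at hsub
  omega

theorem rank_parts (hs : IsCastelnuovo s σ) {r : ℕ} (hr : r < σ) :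
    rank (parts s σ) (levelWidth s r) = r := by
  have hanti := hs.levelWidth_strictAntiOn
  have : {r' ∈ range σ | levelWidth s r < levelWidth s r'} = range r := by
    ext r'
    simp only [mem_filter, mem_range]
    constructor
    · rintro ⟨hr', hlt⟩
      exact (hanti.lt_iff_gt hr hr').1 hlt
    · intro hr'
      exact ⟨hr'.trans hr, (hanti.lt_iff_gt hr (hr'.trans hr)).2 hr'⟩
  rw [rank, parts, filter_image, this, card_image_of_injOn (hanti.injOn.mono ?_), card_range]
  exact fun _ h => (mem_range.1 h).trans hr

theorem mem_row_parts_iff (hs : IsCastelnuovo s σ) {r : ℕ} (hr : r < σ) {i : ℤ} :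
    i ∈ row (parts s σ) (levelWidth s r) ↔ (r : ℤ) < s i := by
  rw [row, rank_parts hs hr, ← mem_coe, coe_Ico, ← hs.level_eq_Ico hr]
  rfl

theorem ofParts_parts (hs : IsCastelnuovo s σ) : ofParts (parts s σ) = s := by
  funext i
  have : {r ∈ range σ | i ∈ row (parts s σ) (levelWidth s r)} = range (s i).toNat := by
    ext r
    simp only [mem_filter, mem_range]
    constructor
    · rintro ⟨hr, hi⟩
      have := (hs.mem_row_parts_iff hr).1 hi
      omega
    · intro hr
      have := hs.apply_le i
      exact ⟨by omega, (hs.mem_row_parts_iff (by omega)).2 (by omega)⟩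
  have hfilter :
      {d ∈ parts s σ | i ∈ row (parts s σ) d} = (range (s i).toNat).image (levelWidth s) :=
    this ▸ filter_image
  rw [ofParts, hfilter, card_image_of_injOn (hs.levelWidth_strictAntiOn.injOn.mono ?_),
    card_range, Int.toNat_of_nonneg (hs.nonneg i)]
  exact fun r hr => show r < σ by have := hs.apply_le i; have := mem_range.1 hr; omega

theorem parts_pos (hs : IsCastelnuovo s σ) : ∀ d ∈ parts s σ, 0 < d := by
  simp only [parts, mem_image, mem_range, forall_exists_index, and_imp]
  rintro _ r hr rfl
  exact hs.levelWidth_pos hr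

end IsCastelnuovo

namespace Castelnuovo

noncomputable def ofPartsEquiv (n : ℕ) :
    {P : Finset ℕ // (∀ d ∈ P, 0 < d) ∧ ∑ d ∈ P, d = n} ≃
      {s : ℤ → ℤ // CastelnuovoZ s ∧ ∑ᶠ m : ℤ, s m = (n : ℤ)} :=
  Equiv.ofBijective
    (fun P => ⟨ofParts P, castelnuovoZ_iff.2 ⟨_, isCastelnuovo_ofParts P.2.1⟩,
      by rw [finsum_ofParts, ← Nat.cast_sum, P.2.2]⟩)
    ⟨fun P Q h => Subtype.ext (ofParts_injOn P.2.1 Q.2.1 (congrArg Subtype.val h)),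
     fun ⟨s, hs, hsum⟩ => by
       obtain ⟨σ, hσ⟩ := castelnuovoZ_iff.1 hs
       have hweight := finsum_ofParts (P := parts s σ)
       rw [hσ.ofParts_parts, hsum, ← Nat.cast_sum, Nat.cast_inj] at hweight
       exact ⟨⟨parts s σ, hσ.parts_pos, hweight.symm⟩, Subtype.ext hσ.ofParts_parts⟩⟩

end Castelnuovo

def Nat.Partition.distinctsEquiv (n : ℕ) :
    {P : Finset ℕ // (∀ d ∈ P, 0 < d) ∧ ∑ d ∈ P, d = n} ≃
      Nat.Partition.distincts n where
  toFun P := ⟨⟨P.1.val, fun hi => P.2.1 _ hi, (sum_val P.1).trans P.2.2⟩,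
    mem_filter.2 ⟨mem_univ _, P.1.nodup⟩⟩
  invFun p := ⟨⟨p.1.parts, (mem_filter.1 p.2).2⟩, fun _ hd => p.1.parts_pos hd,
    (sum_val _).symm.trans p.1.parts_sum⟩
  left_inv _ := rfl
  right_inv _ := rfl

/-- The number of Castelnuovo functions of weight `n` equals the number of
partitions of `n` into distinct parts. -/
theorem castelnuovo_card_eq_distincts_card (n : ℕ) :
    Nat.card {s : ℤ → ℤ // CastelnuovoZ s ∧ ∑ᶠ m : ℤ, s m = (n : ℤ)} =
      (Nat.Partition.distincts n).card := by
  rw [← Nat.card_eq_finsetCard]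
  exact Nat.card_congr
    ((Castelnuovo.ofPartsEquiv n).symm.trans (Nat.Partition.distinctsEquiv n))
end

section
/- Let φ, ψ be Hilbert functions of degree n with ψ(t) = φ(t) + t^u + t^{u+1} + ... + t^v for integers 0 < u ≤ v, so that the Castelnuovo functions satisfy s_ψ = s_φ + t^u − t^{v+1}. Then dim H_ψ = dim H_φ − s(u−2) + s(u−1) + s(u+1) − s(u+2) + s(v−1) − s(v) − s(v+2) + s(v+3) + e, where s = s_φ and e = −1 if v = u, e = 1 if v = u+1, and e = 0 if v ≥ u+2. -/
/-- The difference function `s_φ(m) = φ(m) - φ(m-1)`. -/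
def diffFn (φ : ℤ → ℤ) : ℤ → ℤ := fun m => φ m - φ (m - 1)

/-- `φ` is a Hilbert function of degree `n`. -/
def IsHilbertFn (n : ℕ) (φ : ℤ → ℤ) : Prop :=
  (∀ m, m < 0 → φ m = 0) ∧ (∃ N : ℤ, ∀ m, N ≤ m → φ m = n) ∧ CastelnuovoZ (diffFn φ)

/-- The constant term `c` of the Laurent series `(t⁻¹ - t⁻²) s(t⁻¹) s(t)`. -/
noncomputable def cconst (s : ℤ → ℤ) : ℤ := ∑ᶠ m : ℤ, (s (m - 1) - s (m - 2)) * s m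

/-- The dimension of the stratum `H_φ`: `dim H_φ = 1 + n + c_φ`. -/
noncomputable def dimStratum (n : ℕ) (φ : ℤ → ℤ) : ℤ := 1 + n + cconst (diffFn φ)

/-- auxiliary delta-like function -/
def eAux (u v : ℤ) : ℤ → ℤ := fun m => if m = u then 1 else if m = v + 1 then -1 else 0

/-- the difference of the two summands -/
def dAux (s : ℤ → ℤ) (u v : ℤ) : ℤ → ℤ := fun m =>
  (eAux u v (m - 1) - eAux u v (m - 2)) * s m
  + (s (m - 1) - s (m - 2)) * eAux u v m
  + (eAux u v (m - 1) - eAux u v (m - 2)) * eAux u v m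


lemma dAux_pt (s : ℤ → ℤ) (u v m p q a b c : ℤ) (hp : m - 1 = p) (hq : m - 2 = q)
    (ha : eAux u v p = a) (hb : eAux u v q = b) (hc : eAux u v m = c) :
    dAux s u v m = (a - b) * s m + (s p - s q) * c + (a - b) * c := by
  simp [dAux, hp, hq, ha, hb, hc]

/-- Proposition 3.2.1: if `ψ(t) = φ(t) + t^u + ⋯ + t^v` (so `s_ψ = s_φ + t^u - t^{v+1}`),
then `dim H_ψ = dim H_φ - s(u-2) + s(u-1) + s(u+1) - s(u+2) + s(v-1) - s(v) - s(v+2)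
 + s(v+3) + e` where `s = s_φ` and `e = -1, 1, 0` according as `v = u`, `v = u+1`,
`v ≥ u+2`. -/
theorem dim_formula (n : ℕ) (φ ψ : ℤ → ℤ) (u v : ℤ) (hu : 0 < u) (huv : u ≤ v)
    (hφ : IsHilbertFn n φ) (hψ : IsHilbertFn n ψ)
    (hrel : ∀ m, ψ m = φ m + (if u ≤ m ∧ m ≤ v then 1 else 0)) :
    dimStratum n ψ = dimStratum n φ
        - diffFn φ (u - 2) + diffFn φ (u - 1) + diffFn φ (u + 1) - diffFn φ (u + 2)
        + diffFn φ (v - 1) - diffFn φ v - diffFn φ (v + 2) + diffFn φ (v + 3)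
        + (if v = u then -1 else if v = u + 1 then 1 else 0) := by
  classical
  obtain ⟨-, -, -, hneg, ⟨N, hN⟩, -⟩ := hφ
  set s := diffFn φ with hs
  set e := eAux u v with he
  set d := dAux s u v with hd
  have hsψ : ∀ m, diffFn ψ m = s m + e m := by
    intro m
    simp only [diffFn, hrel, he, eAux, hs]
    split_ifs <;> omega
  have hfin_s : (Function.support s).Finite := by
    apply (Set.finite_Icc 0 N).subset
    intro m hm
    simp only [Function.mem_support] at hm
    simp only [Set.mem_Icc]
    constructor
    · by_contra h; exact hm (hneg m (by omega))
    · by_contra h; exact hm (hN m (by omega))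
  have hfin_a : (Function.support fun m => (s (m-1) - s (m-2)) * s m).Finite := by
    apply hfin_s.subset
    intro m hm
    simp only [Function.mem_support] at hm ⊢
    intro h0; exact hm (by rw [h0]; ring)
  set T : Finset ℤ := {u, u+1, u+2, v+1, v+2, v+3} with hT
  have hd0 : ∀ m, m ∉ T → d m = 0 := by
    intro m hm
    simp only [hT, Finset.mem_insert, Finset.mem_singleton] at hm
    push_neg at hm
    have e1 : e m = 0 := by simp only [he, eAux]; split_ifs <;> omega
    have e2 : e (m-1) = 0 := by simp only [he, eAux]; split_ifs <;> omega
    have e3 : e (m-2) = 0 := by simp only [he, eAux]; split_ifs <;> omega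
    simp [hd, dAux, e1, e2, e3, ← he]
  have hsub : Function.support d ⊆ (T : Set ℤ) := by
    intro m hm
    simp only [Function.mem_support] at hm
    by_contra h
    exact hm (hd0 m (by simpa using h))
  have hfin_d : (Function.support d).Finite := Set.Finite.subset T.finite_toSet hsub
  have key : cconst (diffFn ψ) = cconst s + ∑ m ∈ T, d m := by
    have h1 : cconst (diffFn ψ)
        = ∑ᶠ m : ℤ, ((s (m-1) - s (m-2)) * s m + d m) := by
      apply finsum_congr
      intro m
      rw [hsψ, hsψ, hsψ]
      simp only [hd, dAux, he]
      ring
    rw [h1, finsum_add_distrib hfin_a hfin_d]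
    congr 1
    exact finsum_eq_sum_of_support_subset d hsub
  have goal2 : ∑ m ∈ T, d m
      = - s (u - 2) + s (u - 1) + s (u + 1) - s (u + 2)
        + s (v - 1) - s v - s (v + 2) + s (v + 3)
        + (if v = u then -1 else if v = u + 1 then 1 else 0) := by

    by_cases hv1 : v = u
    · subst hv1
      have TT : T = ({v, v+1, v+2, v+3} : Finset ℤ) := by
        ext x
        simp only [hT, Finset.mem_insert, Finset.mem_singleton]
        omega
      rw [TT, Finset.sum_insert (by simp only [Finset.mem_insert, Finset.mem_singleton]; omega),
        Finset.sum_insert (by simp only [Finset.mem_insert, Finset.mem_singleton]; omega),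
        Finset.sum_insert (by simp only [Finset.mem_singleton]; omega),
        Finset.sum_singleton]
      rw [hd,
        dAux_pt s v v v (v-1) (v-2) 0 0 1 (by ring) (by ring)
          (by unfold eAux; split_ifs <;> omega) (by unfold eAux; split_ifs <;> omega)
          (by unfold eAux; split_ifs <;> omega),
        dAux_pt s v v (v+1) v (v-1) 1 0 (-1) (by ring) (by ring)
          (by unfold eAux; split_ifs <;> omega) (by unfold eAux; split_ifs <;> omega)
          (by unfold eAux; split_ifs <;> omega),
        dAux_pt s v v (v+2) (v+1) v (-1) 1 0 (by ring) (by ring)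
          (by unfold eAux; split_ifs <;> omega) (by unfold eAux; split_ifs <;> omega)
          (by unfold eAux; split_ifs <;> omega),
        dAux_pt s v v (v+3) (v+2) (v+1) 0 (-1) 0 (by ring) (by ring)
          (by unfold eAux; split_ifs <;> omega) (by unfold eAux; split_ifs <;> omega)
          (by unfold eAux; split_ifs <;> omega)]
      rw [if_pos rfl]
      ring
    · by_cases hv2 : v = u + 1
      · subst hv2
        have TT : T = ({u, u+1, u+2, u+3, u+4} : Finset ℤ) := by
          ext x
          simp only [hT, Finset.mem_insert, Finset.mem_singleton]
          omega
        rw [TT, Finset.sum_insert (by simp only [Finset.mem_insert, Finset.mem_singleton]; omega),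
          Finset.sum_insert (by simp only [Finset.mem_insert, Finset.mem_singleton]; omega),
          Finset.sum_insert (by simp only [Finset.mem_insert, Finset.mem_singleton]; omega),
          Finset.sum_insert (by simp only [Finset.mem_singleton]; omega),
          Finset.sum_singleton]
        rw [hd,
          dAux_pt s u (u+1) u (u-1) (u-2) 0 0 1 (by ring) (by ring)
            (by unfold eAux; split_ifs <;> omega) (by unfold eAux; split_ifs <;> omega)
            (by unfold eAux; split_ifs <;> omega),
          dAux_pt s u (u+1) (u+1) u (u-1) 1 0 0 (by ring) (by ring)
            (by unfold eAux; split_ifs <;> omega) (by unfold eAux; split_ifs <;> omega)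
            (by unfold eAux; split_ifs <;> omega),
          dAux_pt s u (u+1) (u+2) (u+1) u 0 1 (-1) (by ring) (by ring)
            (by unfold eAux; split_ifs <;> omega) (by unfold eAux; split_ifs <;> omega)
            (by unfold eAux; split_ifs <;> omega),
          dAux_pt s u (u+1) (u+3) (u+2) (u+1) (-1) 0 0 (by ring) (by ring)
            (by unfold eAux; split_ifs <;> omega) (by unfold eAux; split_ifs <;> omega)
            (by unfold eAux; split_ifs <;> omega),
          dAux_pt s u (u+1) (u+4) (u+3) (u+2) 0 (-1) 0 (by ring) (by ring)
            (by unfold eAux; split_ifs <;> omega) (by unfold eAux; split_ifs <;> omega)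
            (by unfold eAux; split_ifs <;> omega)]
        rw [if_neg (by omega), if_pos rfl]
        have n1 : u + 1 - 1 = u := by ring
        have n2 : u + 1 - 2 = u - 1 := by ring
        have n3 : u + 1 + 1 = u + 2 := by ring
        have n4 : u + 1 + 2 = u + 3 := by ring
        have n5 : u + 1 + 3 = u + 4 := by ring
        simp only [n1, n2, n3, n4, n5]
        ring
      · have hge : u + 2 ≤ v := by omega
        rw [hT, Finset.sum_insert (by simp only [Finset.mem_insert, Finset.mem_singleton]; omega),
          Finset.sum_insert (by simp only [Finset.mem_insert, Finset.mem_singleton]; omega),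
          Finset.sum_insert (by simp only [Finset.mem_insert, Finset.mem_singleton]; omega),
          Finset.sum_insert (by simp only [Finset.mem_insert, Finset.mem_singleton]; omega),
          Finset.sum_insert (by simp only [Finset.mem_singleton]; omega),
          Finset.sum_singleton]
        rw [hd,
          dAux_pt s u v u (u-1) (u-2) 0 0 1 (by ring) (by ring)
            (by unfold eAux; split_ifs <;> omega) (by unfold eAux; split_ifs <;> omega)
            (by unfold eAux; split_ifs <;> omega),
          dAux_pt s u v (u+1) u (u-1) 1 0 0 (by ring) (by ring)
            (by unfold eAux; split_ifs <;> omega) (by unfold eAux; split_ifs <;> omega)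
            (by unfold eAux; split_ifs <;> omega),
          dAux_pt s u v (u+2) (u+1) u 0 1 0 (by ring) (by ring)
            (by unfold eAux; split_ifs <;> omega) (by unfold eAux; split_ifs <;> omega)
            (by unfold eAux; split_ifs <;> omega),
          dAux_pt s u v (v+1) v (v-1) 0 0 (-1) (by ring) (by ring)
            (by unfold eAux; split_ifs <;> omega) (by unfold eAux; split_ifs <;> omega)
            (by unfold eAux; split_ifs <;> omega),
          dAux_pt s u v (v+2) (v+1) v (-1) 0 0 (by ring) (by ring)
            (by unfold eAux; split_ifs <;> omega) (by unfold eAux; split_ifs <;> omega)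
            (by unfold eAux; split_ifs <;> omega),
          dAux_pt s u v (v+3) (v+2) (v+1) 0 (-1) 0 (by ring) (by ring)
            (by unfold eAux; split_ifs <;> omega) (by unfold eAux; split_ifs <;> omega)
            (by unfold eAux; split_ifs <;> omega)]
        rw [if_neg (by omega), if_neg (by omega)]
        ring
  simp only [dimStratum, key, goal2, hs]
  ring
end

section
/- Let s be a Castelnuovo function with generating function s(t), and define c to be the constant term of the Laurent series (t^{−1} − t^{−2}) s(t^{−1}) s(t). If s̃(t) = s(t) + t^u − t^{v+1} for integers 0 < u ≤ v and c̃ is the analogous constant term for s̃, then c̃ − c = −s(u−2) + s(u−1) + s(u+1) − s(u+2) + s(v−1) − s(v) − s(v+2) + s(v+3) + e, where e = −1 if v = u, e = 1 if v = u+1, and e = 0 if v ≥ u+2. -/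
lemma finsum_point (a : ℤ) (c : ℤ → ℤ) :
    ∑ᶠ m : ℤ, (if m = a then c m else 0) = c a := by
  rw [finsum_eq_single _ a fun x hx => if_neg hx, if_pos rfl]

lemma supp_point (a : ℤ) (c : ℤ → ℤ) :
    (Function.support fun m : ℤ => if m = a then c m else 0).Finite := by
  refine Set.Finite.subset (Set.finite_singleton a) fun m hm => ?_
  simp only [Function.mem_support] at hm
  by_contra h
  exact hm (if_neg h)

lemma supp_add {f g : ℤ → ℤ} (hf : (Function.support f).Finite)
    (hg : (Function.support g).Finite) :
    (Function.support fun m => f m + g m).Finite := by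
  refine Set.Finite.subset (hf.union hg) fun m hm => ?_
  simp only [Function.mem_support] at hm
  by_contra h
  simp only [Set.mem_union, Function.mem_support, not_or, not_not] at h
  rw [h.1, h.2, add_zero] at hm
  exact hm rfl

set_option maxHeartbeats 1000000 in
/-- Proposition 3.2.1 (combinatorial core): if `s̃(t) = s(t) + t^u - t^{v+1}` with
`0 < u ≤ v`, then the constant terms of `(t⁻¹ - t⁻²) s(t⁻¹) s(t)` satisfy
`c̃ - c = -s(u-2) + s(u-1) + s(u+1) - s(u+2) + s(v-1) - s(v) - s(v+2) + s(v+3) + e`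
with `e = -1, 1, 0` according as `v = u`, `v = u+1`, `v ≥ u+2`. -/
theorem cconst_diff (s : ℤ → ℤ) (u v : ℤ) (hu : 0 < u) (huv : u ≤ v)
    (hneg : ∀ m, m < 0 → s m = 0) (hfin : ∃ N : ℤ, ∀ m, N ≤ m → s m = 0) :
    cconst (fun m => s m + (if m = u then 1 else 0) - (if m = v + 1 then 1 else 0))
        - cconst s =
      -s (u - 2) + s (u - 1) + s (u + 1) - s (u + 2)
        + s (v - 1) - s v - s (v + 2) + s (v + 3)
        + (if v = u then -1 else if v = u + 1 then 1 else 0) := by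
  obtain ⟨N, hN⟩ := hfin
  set d : ℤ → ℤ := fun m => (if m = u then (1:ℤ) else 0) - (if m = v + 1 then 1 else 0)
    with hd
  have d1 : ∀ m : ℤ, d (m - 1)
      = (if m = u + 1 then (1:ℤ) else 0) - (if m = v + 2 then 1 else 0) := fun m => by
    rw [hd]
    simp only
    rw [if_congr (by omega : m - 1 = u ↔ m = u + 1) rfl rfl,
      if_congr (by omega : m - 1 = v + 1 ↔ m = v + 2) rfl rfl]
  have d2 : ∀ m : ℤ, d (m - 2)
      = (if m = u + 2 then (1:ℤ) else 0) - (if m = v + 3 then 1 else 0) := fun m => by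
    rw [hd]
    simp only
    rw [if_congr (by omega : m - 2 = u ↔ m = u + 2) rfl rfl,
      if_congr (by omega : m - 2 = v + 1 ↔ m = v + 3) rfl rfl]
  set p1 : ℤ → ℤ := fun m => if m = u + 1 then s m else 0 with hp1
  set p2 : ℤ → ℤ := fun m => if m = v + 2 then -s m else 0 with hp2
  set p3 : ℤ → ℤ := fun m => if m = u + 2 then -s m else 0 with hp3
  set p4 : ℤ → ℤ := fun m => if m = v + 3 then s m else 0 with hp4
  set q1 : ℤ → ℤ := fun m =>
    if m = u then (s (m-1) - s (m-2)) + (d (m-1) - d (m-2)) else 0 with hq1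
  set q2 : ℤ → ℤ := fun m =>
    if m = v + 1 then -((s (m-1) - s (m-2)) + (d (m-1) - d (m-2))) else 0 with hq2
  set P : ℤ → ℤ := fun m => p1 m + (p2 m + (p3 m + (p4 m + (q1 m + q2 m)))) with hP
  have key : ∀ m : ℤ, ((s (m-1) + d (m-1)) - (s (m-2) + d (m-2))) * (s m + d m)
      = (s (m-1) - s (m-2)) * s m + P m := by
    intro m
    rw [hP, hq1, hq2]
    simp only
    rw [d1, d2]
    rw [hp1, hp2, hp3, hp4, hd]
    simp only
    split_ifs <;> first | (exfalso; omega) | ring1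
  have hfS : (Function.support fun m : ℤ => (s (m-1) - s (m-2)) * s m).Finite := by
    refine Set.Finite.subset (Set.finite_Icc 0 N) fun m hm => ?_
    simp only [Function.mem_support] at hm
    simp only [Set.mem_Icc]
    constructor
    · by_contra h
      exact hm (by rw [hneg m (by omega)]; ring)
    · by_contra h
      exact hm (by rw [hN m (by omega)]; ring)
  have f1 : (Function.support p1).Finite := by rw [hp1]; exact supp_point _ _
  have f2 : (Function.support p2).Finite := by rw [hp2]; exact supp_point _ _
  have f3 : (Function.support p3).Finite := by rw [hp3]; exact supp_point _ _
  have f4 : (Function.support p4).Finite := by rw [hp4]; exact supp_point _ _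
  have f5 : (Function.support q1).Finite := by rw [hq1]; exact supp_point _ _
  have f6 : (Function.support q2).Finite := by rw [hq2]; exact supp_point _ _
  have h6 : (Function.support fun m => q1 m + q2 m).Finite := supp_add f5 f6
  have h5 : (Function.support fun m => p4 m + (q1 m + q2 m)).Finite := supp_add f4 h6
  have h4 : (Function.support fun m => p3 m + (p4 m + (q1 m + q2 m))).Finite :=
    supp_add f3 h5
  have h3 : (Function.support fun m => p2 m + (p3 m + (p4 m + (q1 m + q2 m)))).Finite :=
    supp_add f2 h4
  have h2 : (Function.support P).Finite := by rw [hP]; exact supp_add f1 h3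
  have hPsum : ∑ᶠ m : ℤ, P m
      = s (u+1) + (-s (v+2) + (-s (u+2) + (s (v+3)
        + (((s (u-1) - s (u-2)) + (d (u-1) - d (u-2)))
          + -((s (v+1-1) - s (v+1-2)) + (d (v+1-1) - d (v+1-2))))))) := by
    rw [hP]
    rw [finsum_add_distrib f1 h3]
    rw [finsum_add_distrib f2 h4]
    rw [finsum_add_distrib f3 h5]
    rw [finsum_add_distrib f4 h6]
    rw [finsum_add_distrib f5 f6]
    rw [hp1, hp2, hp3, hp4, hq1, hq2]
    rw [finsum_point, finsum_point, finsum_point, finsum_point, finsum_point, finsum_point]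
  have hfunc : (fun m : ℤ => s m + (if m = u then (1:ℤ) else 0)
      - (if m = v + 1 then 1 else 0)) = fun m => s m + d m := by
    funext m
    rw [hd]
    ring
  rw [hfunc]
  have hmain : cconst (fun m => s m + d m) = cconst s + ∑ᶠ m : ℤ, P m := by
    unfold cconst
    rw [← finsum_add_distrib hfS h2]
    exact finsum_congr key
  rw [hmain, hPsum, hd]
  simp only
  have e5 : v + 1 - 1 = v := by ring
  have e6 : v + 1 - 2 = v - 1 := by ring
  rw [e5, e6]
  rw [if_neg (by omega : u - 1 ≠ u), if_neg (by omega : u - 1 ≠ v + 1),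
    if_neg (by omega : u - 2 ≠ u), if_neg (by omega : u - 2 ≠ v + 1),
    if_neg (by omega : v ≠ v + 1), if_neg (by omega : v - 1 ≠ v + 1)]
  split_ifs <;> first | (exfalso; omega) | ring1
end

section
/- In the ring ℤ[r,s,t]/(r^a, s^3, t^b) with a, b ≥ 1, if c₁ + c₂ + 1 = a + b with c₁ ≤ b and c₂ ≤ a − 1, then the product (r+s+t)(s+t)^{c₁}(r+s)^{c₂} contains the monomial s² t^{c₁−1} r^{c₂} with positive coefficient; in particular if c₁ − 1 < b and c₂ < a the product is nonzero. -/
open MvPolynomial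

private lemma coeff_mul_nonneg {p q : MvPolynomial (Fin 3) ℤ}
    (hp : ∀ m, 0 ≤ coeff m p) (hq : ∀ m, 0 ≤ coeff m q) (m : Fin 3 →₀ ℕ) :
    0 ≤ coeff m (p * q) := by
  rw [coeff_mul]
  exact Finset.sum_nonneg fun x _ => mul_nonneg (hp _) (hq _)

private lemma coeff_mul_pos {p q : MvPolynomial (Fin 3) ℤ}
    (hp : ∀ m, 0 ≤ coeff m p) (hq : ∀ m, 0 ≤ coeff m q) (u v : Fin 3 →₀ ℕ)
    (hu : 0 < coeff u p) (hv : 0 < coeff v q) :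
    0 < coeff (u + v) (p * q) := by
  rw [coeff_mul]
  refine Finset.sum_pos' (fun x _ => mul_nonneg (hp _) (hq _)) ⟨(u, v), ?_, mul_pos hu hv⟩
  simp [Finset.mem_antidiagonal]

private lemma coeff_XX_nonneg (i j : Fin 3) (m : Fin 3 →₀ ℕ) :
    0 ≤ coeff m (X i + X j : MvPolynomial (Fin 3) ℤ) := by
  rw [coeff_add, coeff_X', coeff_X']
  split <;> split <;> norm_num

private lemma coeff_XX_pow_nonneg (i j : Fin 3) (n : ℕ) (m : Fin 3 →₀ ℕ) :
    0 ≤ coeff m ((X i + X j : MvPolynomial (Fin 3) ℤ) ^ n) := by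
  induction n generalizing m with
  | zero => simp [coeff_one]; split <;> norm_num
  | succ n ih =>
      rw [pow_succ]
      exact coeff_mul_nonneg ih (coeff_XX_nonneg i j) m

private lemma coeff_single_X (j : Fin 3) :
    coeff (Finsupp.single j 1) (X j : MvPolynomial (Fin 3) ℤ) = 1 := by
  simp [coeff_X']

private lemma coeff_XX_single_pos (i j : Fin 3) (hij : i ≠ j) :
    0 < coeff (Finsupp.single j 1) (X i + X j : MvPolynomial (Fin 3) ℤ) := by
  rw [coeff_add, coeff_X', coeff_X']
  rw [if_neg (by simp [Finsupp.single_eq_single_iff, hij]), if_pos rfl]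
  norm_num

private lemma coeff_XX_pow_single_pos (i j : Fin 3) (hij : i ≠ j) (n : ℕ) :
    0 < coeff (Finsupp.single j n) ((X i + X j : MvPolynomial (Fin 3) ℤ) ^ n) := by
  induction n with
  | zero => simp [coeff_one]
  | succ n ih =>
      rw [pow_succ]
      have := coeff_mul_pos (coeff_XX_pow_nonneg i j n) (coeff_XX_nonneg i j)
        (Finsupp.single j n) (Finsupp.single j 1) ih (coeff_XX_single_pos i j hij)
      rwa [← Finsupp.single_add] at this

private lemma coeff_mul_X_pow_zero (m : Fin 3 →₀ ℕ) (f : MvPolynomial (Fin 3) ℤ)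
    (i : Fin 3) (k : ℕ) (h : m i < k) : coeff m (f * X i ^ k) = 0 := by
  rw [X_pow_eq_monomial, coeff_mul_monomial']
  rw [if_neg]
  rw [Finsupp.single_le_iff]
  omega

/-- In `ℤ[r,s,t]/(r^a, s³, t^b)` (with `r = X 0`, `s = X 1`, `t = X 2`), if
`c₁ + c₂ + 1 = a + b`, `1 ≤ c₁ ≤ b` and `c₂ ≤ a - 1`, then
`(r+s+t)(s+t)^{c₁}(r+s)^{c₂}` contains the monomial `r^{c₂} s² t^{c₁-1}` with positive
coefficient; in particular the product is nonzero in the quotient. -/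
theorem chow_product_ne_zero' (a b c₁ c₂ : ℕ) (ha : 1 ≤ a) (hb : 1 ≤ b)
    (hc₁ : 1 ≤ c₁) (hsum : c₁ + c₂ + 1 = a + b) (h₁ : c₁ ≤ b) (h₂ : c₂ ≤ a - 1) :
    0 < MvPolynomial.coeff
        (Finsupp.single (0 : Fin 3) c₂ + Finsupp.single 1 2 + Finsupp.single 2 (c₁ - 1))
        ((X 0 + X 1 + X 2) * (X 1 + X 2) ^ c₁ * (X 0 + X 1) ^ c₂ :
          MvPolynomial (Fin 3) ℤ) ∧
      Ideal.Quotient.mk (Ideal.span ({X 0 ^ a, X 1 ^ 3, X 2 ^ b} : Set (MvPolynomial (Fin 3) ℤ)))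
        ((X 0 + X 1 + X 2) * (X 1 + X 2) ^ c₁ * (X 0 + X 1) ^ c₂) ≠ 0 := by
  set m : Fin 3 →₀ ℕ :=
    Finsupp.single (0 : Fin 3) c₂ + Finsupp.single 1 2 + Finsupp.single 2 (c₁ - 1) with hm
  -- coefficients of A = X0+X1+X2 are nonneg
  have hAnn : ∀ n, 0 ≤ coeff n (X 0 + X 1 + X 2 : MvPolynomial (Fin 3) ℤ) := by
    intro n
    rw [coeff_add, coeff_add, coeff_X', coeff_X', coeff_X']
    split <;> split <;> split <;> norm_num
  have hA : 0 < coeff (Finsupp.single (1 : Fin 3) 1)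
      (X 0 + X 1 + X 2 : MvPolynomial (Fin 3) ℤ) := by
    rw [coeff_add, coeff_add, coeff_X', coeff_X', coeff_X']
    rw [if_neg (by simp [Finsupp.single_eq_single_iff]), if_pos rfl,
      if_neg (by simp [Finsupp.single_eq_single_iff])]
    norm_num
  -- coefficient of B = (X1+X2)^c₁ at single 1 1 + single 2 (c₁-1)
  have hB : 0 < coeff (Finsupp.single (1 : Fin 3) 1 + Finsupp.single 2 (c₁ - 1))
      ((X 1 + X 2 : MvPolynomial (Fin 3) ℤ) ^ c₁) := by
    obtain ⟨d, hd⟩ : ∃ d, c₁ = d + 1 := ⟨c₁ - 1, by omega⟩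
    subst hd
    rw [pow_succ, add_comm (Finsupp.single (1 : Fin 3) 1)]
    simp only [Nat.add_sub_cancel]
    have h1 : 0 < coeff (Finsupp.single (1 : Fin 3) 1) (X 1 + X 2 : MvPolynomial (Fin 3) ℤ) := by
      have := coeff_XX_single_pos 2 1 (by decide)
      rwa [add_comm (X 2)] at this
    exact coeff_mul_pos (coeff_XX_pow_nonneg 1 2 d) (coeff_XX_nonneg 1 2) _ _
      (coeff_XX_pow_single_pos 1 2 (by decide) d) h1
  have hC : 0 < coeff (Finsupp.single (0 : Fin 3) c₂)
      ((X 0 + X 1 : MvPolynomial (Fin 3) ℤ) ^ c₂) := by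
    have := coeff_XX_pow_single_pos 1 0 (by decide) c₂
    rwa [add_comm (X 1)] at this
  have hpos : 0 < coeff m
      ((X 0 + X 1 + X 2) * (X 1 + X 2) ^ c₁ * (X 0 + X 1) ^ c₂ : MvPolynomial (Fin 3) ℤ) := by
    have hAB := coeff_mul_pos hAnn (coeff_XX_pow_nonneg 1 2 c₁) _ _ hA hB
    have hABnn := coeff_mul_nonneg hAnn (coeff_XX_pow_nonneg 1 2 c₁)
    have h := coeff_mul_pos hABnn (coeff_XX_pow_nonneg 0 1 c₂) _ _ hAB hC
    have hmeq : Finsupp.single (1 : Fin 3) 1 +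
        (Finsupp.single (1 : Fin 3) 1 + Finsupp.single 2 (c₁ - 1)) +
        Finsupp.single (0 : Fin 3) c₂ = m := by
      rw [hm]
      ext i
      simp [Finsupp.add_apply, Finsupp.single_apply]
      split <;> split <;> split <;> omega
    rwa [hmeq] at h
  refine ⟨hpos, ?_⟩
  intro hzero
  rw [Ideal.Quotient.eq_zero_iff_mem] at hzero
  have hins : ({X 0 ^ a, X 1 ^ 3, X 2 ^ b} : Set (MvPolynomial (Fin 3) ℤ)) =
      insert (X 0 ^ a) (insert (X 1 ^ 3) {X 2 ^ b}) := rfl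
  rw [hins, Ideal.mem_span_insert] at hzero
  obtain ⟨f, z, hz, hp⟩ := hzero
  rw [Ideal.mem_span_insert] at hz
  obtain ⟨g, w, hw, hzeq⟩ := hz
  rw [Ideal.mem_span_singleton] at hw
  obtain ⟨h, hweq⟩ := hw
  have hm0 : m 0 = c₂ := by simp [hm, Finsupp.add_apply, Finsupp.single_apply]
  have hm1 : m 1 = 2 := by simp [hm, Finsupp.add_apply, Finsupp.single_apply]
  have hm2 : m 2 = c₁ - 1 := by simp [hm, Finsupp.add_apply, Finsupp.single_apply]
  have hcoeff : coeff m
      ((X 0 + X 1 + X 2) * (X 1 + X 2) ^ c₁ * (X 0 + X 1) ^ c₂ : MvPolynomial (Fin 3) ℤ) = 0 := by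
    rw [hp, hzeq, hweq, mul_comm (X 2 ^ b) h]
    rw [coeff_add, coeff_add, coeff_mul_X_pow_zero _ _ _ _ (by omega),
      coeff_mul_X_pow_zero _ _ _ _ (by omega), coeff_mul_X_pow_zero _ _ _ _ (by omega)]
    ring
  rw [hcoeff] at hpos
  exact lt_irrefl 0 hpos
end

section
/- Let A = k[x,y,z], let X be a zero-dimensional subscheme of ℙ² of length n with graded ideal I_X, and let J ⊂ I_X be a graded ideal such that the Hilbert series of I_X/J is t^u + t^{u+1} + ... + t^v with 0 < u ≤ v. If all minimal generators of I_X have degree ≤ u or ≥ v+2, then F = I_X/J is generated in degree u; i.e., F is a shifted truncated point module of length v+1−u. -/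
open MvPolynomial

attribute [local instance] MvPolynomial.gradedAlgebra

/-!
Since the Hilbert series of `I/J` vanishes outside `[u, v]`, the graded pieces `I_d` and `J_d`
coincide there, so every generator of `I` of degree `< u` or `≥ v + 2` already lies in `J`;
the remaining generators have degree exactly `u`.
-/

namespace MvPolynomial

variable {σ k : Type*} [Field k]

instance finiteDimensional_homogeneousSubmodule [Finite σ] (n : ℕ) :
    FiniteDimensional k (homogeneousSubmodule σ k n) :=
  Module.Finite.iff_fg.mpr (homogeneousSubmodule_fg σ k n)

theorem mem_of_isHomogeneous_of_finrank_le [Finite σ] {I J : Submodule k (MvPolynomial σ k)}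
    (hJI : J ≤ I) {n : ℕ}
    (hrank : Module.finrank k ↥(homogeneousSubmodule σ k n ⊓ I) ≤
      Module.finrank k ↥(homogeneousSubmodule σ k n ⊓ J))
    {f : MvPolynomial σ k} (hf : f.IsHomogeneous n) (hfI : f ∈ I) : f ∈ J := by
  have hle : homogeneousSubmodule σ k n ⊓ J ≤ homogeneousSubmodule σ k n ⊓ I :=
    inf_le_inf_left _ hJI
  have heq := Submodule.eq_of_le_of_finrank_le hle hrank
  have hfIn : f ∈ homogeneousSubmodule σ k n ⊓ I := ⟨hf, hfI⟩
  exact (heq ▸ hfIn).2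

end MvPolynomial

theorem quotient_generated_in_degree_u_general
    (k : Type*) [Field k] (u v : ℕ)
    (I J : Ideal (MvPolynomial (Fin 3) k))
    (hJI : J ≤ I)
    -- the Hilbert series of `I/J` is `t^u + t^{u+1} + ⋯ + t^v`
    (hhilb : ∀ m : ℕ,
      Module.finrank k ↥(homogeneousSubmodule (Fin 3) k m ⊓ Submodule.restrictScalars k I) =
      Module.finrank k ↥(homogeneousSubmodule (Fin 3) k m ⊓ Submodule.restrictScalars k J) +
        (if u ≤ m ∧ m ≤ v then 1 else 0))
    -- `I` is generated by homogeneous elements of degrees `≤ u` or `≥ v+2`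
    (hgen : ∃ S : Set (MvPolynomial (Fin 3) k), Ideal.span S = I ∧
      ∀ f ∈ S, ∃ d : ℕ, f.IsHomogeneous d ∧ (d ≤ u ∨ v + 2 ≤ d)) :
    I ≤ J ⊔ Ideal.span {x | x ∈ I ∧ x ∈ homogeneousSubmodule (Fin 3) k u} := by
  obtain ⟨S, rfl, hS⟩ := hgen
  refine Ideal.span_le.mpr fun f hf => ?_
  obtain ⟨d, hfd, hd⟩ := hS f hf
  have hfI : f ∈ Ideal.span S := Ideal.subset_span hf
  rcases eq_or_ne d u with rfl | hdu
  · exact Ideal.mem_sup_right (Ideal.subset_span ⟨hfI, hfd⟩)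
  · have hout : ¬ (u ≤ d ∧ d ≤ v) := by omega
    refine Ideal.mem_sup_left (mem_of_isHomogeneous_of_finrank_le
      (I := (Ideal.span S).restrictScalars k) (J := J.restrictScalars k) hJI ?_ hfd hfI)
    rw [hhilb d, if_neg hout, add_zero]

/-- Let `A = k[x,y,z]`, `I` the graded ideal of a zero-dimensional subscheme, and
`J ⊆ I` a graded ideal such that `I/J` has Hilbert series `t^u + ⋯ + t^v` (`0 < u ≤ v`).
If all minimal generators of `I` have degree `≤ u` or `≥ v+2`, then `F = I/J` is
generated in degree `u`, i.e. `I ⊆ J + A·I_u`. -/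
theorem quotient_generated_in_degree_u
    (k : Type*) [Field k] (u v : ℕ) (hu : 0 < u) (huv : u ≤ v)
    (I J : Ideal (MvPolynomial (Fin 3) k))
    (hIhom : Ideal.IsHomogeneous (homogeneousSubmodule (Fin 3) k) I)
    (hJhom : Ideal.IsHomogeneous (homogeneousSubmodule (Fin 3) k) J)
    (hJI : J ≤ I)
    -- the Hilbert series of `I/J` is `t^u + t^{u+1} + ⋯ + t^v`
    (hhilb : ∀ m : ℕ,
      Module.finrank k ↥(homogeneousSubmodule (Fin 3) k m ⊓ Submodule.restrictScalars k I) =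
      Module.finrank k ↥(homogeneousSubmodule (Fin 3) k m ⊓ Submodule.restrictScalars k J) +
        (if u ≤ m ∧ m ≤ v then 1 else 0))
    -- `I` is generated by homogeneous elements of degrees `≤ u` or `≥ v+2`
    (hgen : ∃ S : Set (MvPolynomial (Fin 3) k), Ideal.span S = I ∧
      ∀ f ∈ S, ∃ d : ℕ, f.IsHomogeneous d ∧ (d ≤ u ∨ v + 2 ≤ d)) :
    I ≤ J ⊔ Ideal.span {x | x ∈ I ∧ x ∈ homogeneousSubmodule (Fin 3) k u} :=
  quotient_generated_in_degree_u_general k u v I J hJI hhilb hgen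
end

section
/- Let φ, ψ be Hilbert functions of degree n whose Castelnuovo diagrams satisfy s_ψ = s_φ + t^u − t^{v+1} with 0 < u ≤ v and v ≥ u+2, and suppose the pair (φ, ψ) has length zero, with generic Betti numbers (aᵢ), (bᵢ) of φ. Then dim H_φ < dim H_ψ if and only if a_u = b_{u+1} + 1 and a_{v+2} = b_{v+3}; and in that case dim H_ψ = dim H_φ + 1. -/
/-- The generic Betti number difference `a_l - b_l = -s_l + 2 s_{l-1} - s_{l-2}`. -/
def bettiDiff (s : ℤ → ℤ) (l : ℤ) : ℤ := -(s l) + 2 * s (l - 1) - s (l - 2)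

/-- The generic Betti number `a_l`. -/
def bettiA (s : ℤ → ℤ) (l : ℤ) : ℤ := max (bettiDiff s l) 0

/-- The generic Betti number `b_l`. -/
def bettiB (s : ℤ → ℤ) (l : ℤ) : ℤ := max (-(bettiDiff s l)) 0


/-!
Write `s = s_φ` and `e_m` for the indicator of `{m}`, so that `s_ψ = s + e_u - e_{v+1}` and
`ψ = φ + 1_[u, v+1)`. Length zero forces `s` to be constant on `[u, v+1]`: a drop of `s` inside
this interval would make `φ + 1_[j, k)` a Hilbert function strictly between `φ` and `ψ` for a
proper subinterval `[j, k)`, the Castelnuovo shape of `s + e_j - e_k` being inherited from those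
of `s_φ` and `s_ψ`. With this constancy only six summands of `c_ψ - c_φ` survive, and
`dim H_ψ - dim H_φ = (s_{u-1} - s_{u-2}) + (s_{v+3} - s_{v+2})`. Since `s` is a Castelnuovo
function that is nonincreasing from `u - 1` on, the first bracket is at most `1` and the second
at most `0`. So `dim H_φ < dim H_ψ` exactly when both brackets are extremal, the difference is
then `1`, and the two Betti-number equalities are these two extremality conditions.
-/
namespace CastelnuovoZ

variable {s : ℤ → ℤ}

theorem eq_add_one_of_lt {σ : ℕ} (hneg : ∀ m, m < 0 → s m = 0)
    (hinit : ∀ i : ℕ, i < σ → s i = i + 1) {m : ℤ} (hm : -1 ≤ m) (hmσ : m < σ) :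
    s m = m + 1 := by
  rcases hm.lt_or_eq with hm | rfl
  · simpa [Int.toNat_of_nonneg (by omega : 0 ≤ m)] using hinit m.toNat (by omega)
  · simp [hneg]

theorem le_sub_one_add_one (hs : CastelnuovoZ s) (m : ℤ) : s m ≤ s (m - 1) + 1 := by
  obtain ⟨-, hneg, -, σ, hinit, hanti⟩ := hs
  rcases lt_or_ge m 0 with hm | hm
  · simp [hneg m hm, hneg (m - 1) (by omega)]
  by_cases hmσ : m < σ
  · rw [eq_add_one_of_lt hneg hinit (by omega) hmσ,
      eq_add_one_of_lt hneg hinit (by omega) (by omega)]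
    omega
  · have := hanti (m - 1) (by omega)
    rw [sub_add_cancel] at this
    omega

theorem antitoneOn_of_le_sub_one (hs : CastelnuovoZ s) {p : ℤ} (hp : 0 ≤ p)
    (hdrop : s p ≤ s (p - 1)) : AntitoneOn s (Set.Ici (p - 1)) := by
  obtain ⟨-, hneg, -, σ, hinit, hanti⟩ := hs
  have hσp : (σ : ℤ) ≤ p := by
    by_contra! h
    rw [eq_add_one_of_lt hneg hinit (by omega) h,
      eq_add_one_of_lt hneg hinit (by omega) (by omega)] at hdrop
    omega
  refine antitoneOn_of_add_one_le Set.ordConnected_Ici fun m _ hm _ => hanti m ?_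
  simp only [Set.mem_Ici] at hm
  omega

theorem support_finite (hs : CastelnuovoZ s) : s.support.Finite := by
  obtain ⟨-, hneg, ⟨N, hN⟩, -⟩ := hs
  refine (Set.finite_Ico 0 N).subset fun m hm => ?_
  rw [Function.mem_support] at hm
  exact ⟨by by_contra h; exact hm (hneg m (by omega)), by by_contra h; exact hm (hN m (by omega))⟩

theorem of_eq_of_lt (hs : CastelnuovoZ s) {t : ℤ → ℤ} {p : ℤ} (hp : 0 ≤ p)
    (ht0 : ∀ m, 0 ≤ t m) (hts : ∀ m, m < p → t m = s m) (htN : ∃ N : ℤ, ∀ m, N ≤ m → t m = 0)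
    (htA : ∀ m, p - 1 ≤ m → t (m + 1) ≤ t m) : CastelnuovoZ t := by
  obtain ⟨-, hneg, -, σ, hinit, hanti⟩ := hs
  refine ⟨ht0, fun m hm => (hts m (by omega)).trans (hneg m hm), htN, min σ p.toNat,
    fun i hi => ?_, fun m hm => ?_⟩
  · rw [hts i (by omega)]
    exact hinit i (by omega)
  · by_cases hmp : p - 1 ≤ m
    · exact htA m hmp
    · rw [hts (m + 1) (by omega), hts m (by omega)]
      exact hanti m (by omega)

end CastelnuovoZ

section AddSingleSubSingle

variable {s : ℤ → ℤ} {u K j k : ℤ}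

theorem AntitoneOn.apply_add_one_le {f : ℤ → ℤ} {p m : ℤ} (hf : AntitoneOn f (Set.Ici p))
    (hm : p ≤ m) : f (m + 1) ≤ f m :=
  hf (Set.mem_Ici.2 hm) (Set.mem_Ici.2 (by omega)) (by omega)

theorem apply_add_one_le_add_single_sub_single (hanti : AntitoneOn s (Set.Ici j)) (hjk : j < k)
    (hk : s (k + 1) < s k) (m : ℤ) (hm : j ≤ m) :
    (s + Pi.single j 1 - Pi.single k 1 : ℤ → ℤ) (m + 1) ≤
      (s + Pi.single j 1 - Pi.single k 1 : ℤ → ℤ) m := by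
  have hstep := hanti.apply_add_one_le hm
  simp only [Pi.add_apply, Pi.sub_apply, Pi.single_apply]
  rcases eq_or_ne m k with rfl | _ <;> split_ifs <;> omega

theorem CastelnuovoZ.antitoneOn_of_add_single_sub_single (hs : CastelnuovoZ s)
    (hs' : CastelnuovoZ (s + Pi.single u 1 - Pi.single K 1)) (hu : 0 ≤ u) (huK : u < K) :
    AntitoneOn s (Set.Ici (u - 1)) := by
  refine hs.antitoneOn_of_le_sub_one hu ?_
  have := hs'.le_sub_one_add_one u
  simp only [Pi.add_apply, Pi.sub_apply, Pi.single_apply] at this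
  split_ifs at this <;> omega

theorem CastelnuovoZ.antitoneOn_add_single_sub_single (hs : CastelnuovoZ s)
    (hs' : CastelnuovoZ (s + Pi.single u 1 - Pi.single K 1)) (hu : 0 ≤ u) (huK : u < K) :
    AntitoneOn (s + Pi.single u 1 - Pi.single K 1) (Set.Ici u) := by
  have hstep :=
    (hs.antitoneOn_of_add_single_sub_single hs' hu huK).apply_add_one_le (m := u) (by omega)
  have := hs'.antitoneOn_of_le_sub_one (p := u + 1) (by omega) ?_
  · simpa using this
  · simp only [Pi.add_apply, Pi.sub_apply, Pi.single_apply, add_sub_cancel_right]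
    split_ifs <;> omega

theorem CastelnuovoZ.apply_add_one_lt_of_add_single_sub_single (hs : CastelnuovoZ s)
    (hs' : CastelnuovoZ (s + Pi.single u 1 - Pi.single K 1)) (hu : 0 ≤ u) (huK : u < K) :
    s (K + 1) < s K := by
  have := (hs.antitoneOn_add_single_sub_single hs' hu huK).apply_add_one_le (m := K) huK.le
  simp only [Pi.add_apply, Pi.sub_apply, Pi.single_apply] at this
  split_ifs at this <;> omega

theorem CastelnuovoZ.add_single_sub_single_of_le (hs : CastelnuovoZ s)
    (hs' : CastelnuovoZ (s + Pi.single u 1 - Pi.single K 1)) (hu : 0 ≤ u)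
    (huj : u ≤ j) (hjk : j < k) (hkK : k ≤ K) (hj : j = u ∨ s j < s (j - 1))
    (hk : k = K ∨ s (k + 1) < s k) : CastelnuovoZ (s + Pi.single j 1 - Pi.single k 1) := by
  have hsA := hs.antitoneOn_of_add_single_sub_single hs' hu (by omega)
  have hk' : s (k + 1) < s k :=
    hk.elim (fun hkK => hkK ▸ hs.apply_add_one_lt_of_add_single_sub_single hs' hu (by omega)) id
  have htA := apply_add_one_le_add_single_sub_single
    (hsA.mono (Set.Ici_subset_Ici.2 (by omega))) hjk hk'
  have ht0 : ∀ m, 0 ≤ (s + Pi.single j 1 - Pi.single k 1 : ℤ → ℤ) m := by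
    intro m
    have := hs.1 m
    have := hs.1 (k + 1)
    simp only [Pi.add_apply, Pi.sub_apply, Pi.single_apply]
    rcases eq_or_ne m k with rfl | _ <;> split_ifs <;> omega
  have htN : ∃ N : ℤ, ∀ m, N ≤ m → (s + Pi.single j 1 - Pi.single k 1 : ℤ → ℤ) m = 0 := by
    obtain ⟨N, hN⟩ := hs.2.2.1
    refine ⟨max N (k + 1), fun m hm => ?_⟩
    simp only [Pi.add_apply, Pi.sub_apply, Pi.single_apply, hN m (by omega)]
    split_ifs <;> omega
  -- For `j = u` the new function agrees with `s + e_u - e_K` below `u + 1`, otherwise with `s`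
  -- below `j`.
  rcases hj with rfl | hj
  · refine hs'.of_eq_of_lt (p := j + 1) (by omega) ht0 (fun m hm => ?_) htN
      (fun m hm => htA m (by omega))
    simp only [Pi.add_apply, Pi.sub_apply, Pi.single_apply]
    split_ifs <;> omega
  · refine hs.of_eq_of_lt (p := j) (by omega) ht0 (fun m hm => ?_) htN (fun m hm => ?_)
    · simp only [Pi.add_apply, Pi.sub_apply, Pi.single_apply]
      split_ifs <;> omega
    · rcases hm.lt_or_eq with hm | rfl
      · exact htA m (by omega)
      · simp only [Pi.add_apply, Pi.sub_apply, Pi.single_apply, sub_add_cancel]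
        split_ifs <;> omega

end AddSingleSubSingle

theorem eq_of_diffFn_eq {f g : ℤ → ℤ} (hf : ∀ m, m < 0 → f m = 0) (hg : ∀ m, m < 0 → g m = 0)
    (h : diffFn f = diffFn g) : f = g := by
  funext m
  rcases lt_or_ge m 0 with hm | hm
  · rw [hf m hm, hg m hm]
  induction m, hm using Int.leInduction with
  | base => simpa [diffFn, hf, hg] using congrFun h 0
  | succ m _ ih =>
    have := congrFun h (m + 1)
    simp only [diffFn, add_sub_cancel_right] at this
    omega

theorem diffFn_add_indicator_Ico (φ : ℤ → ℤ) {j k : ℤ} (hjk : j ≤ k) :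
    diffFn (φ + (Set.Ico j k).indicator 1) = diffFn φ + Pi.single j 1 - Pi.single k 1 := by
  funext m
  simp only [diffFn, Pi.add_apply, Pi.sub_apply, Pi.single_apply, Set.indicator_apply,
    Set.mem_Ico, Pi.one_apply]
  split_ifs <;> omega

theorem IsHilbertFn.add_indicator_Ico {n : ℕ} {φ : ℤ → ℤ} (hφ : IsHilbertFn n φ) {j k : ℤ}
    (hj : 0 ≤ j) (hjk : j ≤ k) (hτ : CastelnuovoZ (diffFn φ + Pi.single j 1 - Pi.single k 1)) :
    IsHilbertFn n (φ + (Set.Ico j k).indicator 1) := by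
  obtain ⟨hneg, ⟨N, hN⟩, -⟩ := hφ
  refine ⟨fun m hm => ?_, ⟨max N k, fun m hm => ?_⟩, diffFn_add_indicator_Ico φ hjk ▸ hτ⟩
  · simp only [Pi.add_apply, hneg m hm, Set.indicator_apply, Set.mem_Ico, Pi.one_apply]
    split_ifs <;> omega
  · simp only [Pi.add_apply, hN m (by omega), Set.indicator_apply, Set.mem_Ico, Pi.one_apply]
    split_ifs <;> omega

def LengthZero (n : ℕ) (φ ψ : ℤ → ℤ) : Prop :=
  ¬ ∃ τ : ℤ → ℤ, IsHilbertFn n τ ∧ (∀ m, φ m ≤ τ m) ∧ (∀ m, τ m ≤ ψ m) ∧ τ ≠ φ ∧ τ ≠ ψ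

theorem IsHilbertFn.not_lengthZero_add_indicator_Ico {n : ℕ} {φ : ℤ → ℤ}
    (hφ : IsHilbertFn n φ) {u K j k : ℤ} (hu : 0 ≤ u) (huj : u ≤ j) (hjk : j < k) (hkK : k ≤ K)
    (hne : j ≠ u ∨ k ≠ K) (hτ : CastelnuovoZ (diffFn φ + Pi.single j 1 - Pi.single k 1)) :
    ¬ LengthZero n φ (φ + (Set.Ico u K).indicator 1) := by
  refine not_not.2 ⟨φ + (Set.Ico j k).indicator 1, hφ.add_indicator_Ico (by omega) hjk.le hτ,
    fun m => ?_, fun m => ?_, fun h => ?_, fun h => ?_⟩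
  · simp only [Pi.add_apply, Set.indicator_apply, Pi.one_apply]
    split_ifs <;> omega
  · simp only [Pi.add_apply, Set.indicator_apply, Set.mem_Ico, Pi.one_apply]
    split_ifs <;> omega
  · have := congrFun h j
    simp [hjk] at this
  · have := Set.indicator_one_inj ℤ (add_left_cancel h)
    rw [Set.Ico_eq_Ico_iff (Or.inl hjk)] at this
    omega

theorem LengthZero.diffFn_add_one_eq {n : ℕ} {φ ψ : ℤ → ℤ} (hlz : LengthZero n φ ψ)
    (hφ : IsHilbertFn n φ) (hψ : IsHilbertFn n ψ) {u K : ℤ} (hu : 0 ≤ u) (huK : u + 2 ≤ K)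
    (hrel : diffFn ψ = diffFn φ + Pi.single u 1 - Pi.single K 1) {w : ℤ} (huw : u ≤ w)
    (hwK : w < K) : diffFn φ (w + 1) = diffFn φ w := by
  have hs' := hrel ▸ hψ.2.2
  have hψφ : ψ = φ + (Set.Ico u K).indicator 1 := by
    refine eq_of_diffFn_eq hψ.1 (fun m hm => ?_)
      (by rw [hrel, diffFn_add_indicator_Ico φ (by omega)])
    simp only [Pi.add_apply, hφ.1 m hm, Set.indicator_apply, Set.mem_Ico, Pi.one_apply]
    split_ifs <;> omega
  by_contra hne
  have hdrop := lt_of_le_of_ne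
    ((hφ.2.2.antitoneOn_of_add_single_sub_single hs' hu (by omega)).apply_add_one_le
      (by omega)) hne
  rw [hψφ] at hlz
  -- The drop at `w + 1` puts `φ + 1_[w+1, K)`, or `φ + 1_[u, w)` if `w + 1 = K`, strictly
  -- between `φ` and `ψ`.
  rcases (by omega : w + 1 < K ∨ w + 1 = K) with hw | rfl
  · refine hφ.not_lengthZero_add_indicator_Ico hu (by omega) hw le_rfl (Or.inl (by omega))
      (hφ.2.2.add_single_sub_single_of_le hs' hu (by omega) hw le_rfl (Or.inr ?_) (Or.inl rfl))
      hlz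
    rwa [add_sub_cancel_right]
  · exact hφ.not_lengthZero_add_indicator_Ico hu le_rfl (by omega) (by omega) (Or.inr (by omega))
      (hφ.2.2.add_single_sub_single_of_le hs' hu le_rfl (by omega) (by omega) (Or.inl rfl)
        (Or.inr hdrop)) hlz

theorem LengthZero.diffFn_eq_of_mem_Icc {n : ℕ} {φ ψ : ℤ → ℤ} (hlz : LengthZero n φ ψ)
    (hφ : IsHilbertFn n φ) (hψ : IsHilbertFn n ψ) {u K : ℤ} (hu : 0 ≤ u) (huK : u + 2 ≤ K)
    (hrel : diffFn ψ = diffFn φ + Pi.single u 1 - Pi.single K 1) {m : ℤ}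
    (hm : m ∈ Set.Icc u K) : diffFn φ m = diffFn φ u := by
  obtain ⟨hum, hmK⟩ := hm
  induction m, hum using Int.leInduction with
  | base => rfl
  | succ m hum ih =>
    rw [hlz.diffFn_add_one_eq hφ hψ hu huK hrel hum (by omega), ih (by omega)]

theorem cconst_add_single_sub_single {s : ℤ → ℤ} (hs : s.support.Finite) {u K : ℤ}
    (huK : u + 3 ≤ K) :
    cconst (s + Pi.single u 1 - Pi.single K 1) = cconst s + (s (u - 1) - s (u - 2)) +
      (s (u + 1) - s (u + 2)) - (s (K - 1) - s (K - 2)) - (s (K + 1) - s (K + 2)) := by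
  set t : ℤ → ℤ := s + Pi.single u 1 - Pi.single K 1 with ht
  set T : (ℤ → ℤ) → ℤ → ℤ := fun f m => (f (m - 1) - f (m - 2)) * f m with hT
  -- `u + 3 ≤ K` keeps the summands changed near `u` apart from those changed near `K`.
  set P : Finset ℤ := {u, u + 1, u + 2, K, K + 1, K + 2} with hP
  have hsupp : Function.support (fun m => T t m - T s m) ⊆ P := by
    intro m hm
    contrapose! hm
    simp only [hP, Finset.coe_insert, Finset.coe_singleton, Set.mem_insert_iff,
      Set.mem_singleton_iff] at hm
    simp only [Function.notMem_support, hT, ht, Pi.add_apply, Pi.sub_apply, Pi.single_apply]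
    rw [if_neg (by omega), if_neg (by omega), if_neg (by omega), if_neg (by omega),
      if_neg (by omega), if_neg (by omega)]
    ring
  calc cconst t = ∑ᶠ m, (T s m + (T t m - T s m)) := by simp [cconst, hT]
    _ = cconst s + ∑ m ∈ P, (T t m - T s m) := by
      rw [finsum_add_distrib (hs.subset (Function.support_mul_subset_right _ _))
        (P.finite_toSet.subset hsupp), finsum_eq_sum_of_support_subset _ hsupp]
      rfl
    _ = _ := by
      rw [Finset.sum_insert (by simp; omega), Finset.sum_insert (by simp; omega),
        Finset.sum_insert (by simp; omega), Finset.sum_insert (by simp),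
        Finset.sum_pair (by omega)]
      simp (disch := omega) only [hT, ht, Pi.add_apply, Pi.sub_apply, Pi.single_apply,
        if_pos, if_neg, if_true]
      ring_nf

theorem LengthZero.dimStratum_eq {n : ℕ} {φ ψ : ℤ → ℤ} (hlz : LengthZero n φ ψ)
    (hφ : IsHilbertFn n φ) (hψ : IsHilbertFn n ψ) {u K : ℤ} (hu : 0 ≤ u) (huK : u + 3 ≤ K)
    (hrel : diffFn ψ = diffFn φ + Pi.single u 1 - Pi.single K 1) :
    dimStratum n ψ = dimStratum n φ + (diffFn φ (u - 1) - diffFn φ (u - 2)) +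
      (diffFn φ (K + 2) - diffFn φ (K + 1)) := by
  have hflat := fun m (hm : m ∈ Set.Icc u K) =>
    hlz.diffFn_eq_of_mem_Icc hφ hψ hu (by omega) hrel hm
  rw [dimStratum, dimStratum, hrel, cconst_add_single_sub_single hφ.2.2.support_finite huK,
    hflat (u + 1) ⟨by omega, by omega⟩, hflat (u + 2) ⟨by omega, by omega⟩,
    hflat (K - 1) ⟨by omega, by omega⟩, hflat (K - 2) ⟨by omega, by omega⟩]
  ring

theorem bettiA_eq_bettiB_add_one_iff {s : ℤ → ℤ} {u : ℤ} (hflat : s (u + 1) = s u)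
    (hdec : s u ≤ s (u - 1)) :
    bettiA s u = bettiB s (u + 1) + 1 ↔ s (u - 1) = s (u - 2) + 1 := by
  simp only [bettiA, bettiB, bettiDiff, add_sub_cancel_right, show u + 1 - 2 = u - 1 by ring]
  omega

theorem bettiA_eq_bettiB_iff {s : ℤ → ℤ} {l : ℤ} (hflat : s (l - 1) = s (l - 2))
    (hdrop : s l < s (l - 1)) : bettiA s l = bettiB s (l + 1) ↔ s (l + 1) = s l := by
  simp only [bettiA, bettiB, bettiDiff, add_sub_cancel_right, show l + 1 - 2 = l - 1 by ring]
  omega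

/-- Corollary 3.2.2: for a length-zero pair `(φ, ψ)` with `s_ψ = s_φ + t^u - t^{v+1}`
and `v ≥ u+2`: `dim H_φ < dim H_ψ` iff `a_u = b_{u+1} + 1` and `a_{v+2} = b_{v+3}`,
and in that case `dim H_ψ = dim H_φ + 1`. -/
theorem dimension_condition_iff (n : ℕ) (u v : ℤ) (hu : 0 < u) (hv : u + 2 ≤ v)
    (φ ψ : ℤ → ℤ) (hφ : IsHilbertFn n φ) (hψ : IsHilbertFn n ψ)
    (hrel : ∀ m, diffFn ψ m =
      diffFn φ m + (if m = u then 1 else 0) - (if m = v + 1 then 1 else 0))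
    -- length zero: there is no Hilbert function strictly between `φ` and `ψ`
    (hlz : ¬ ∃ τ : ℤ → ℤ, IsHilbertFn n τ ∧ (∀ m, φ m ≤ τ m) ∧ (∀ m, τ m ≤ ψ m) ∧
      τ ≠ φ ∧ τ ≠ ψ) :
    (dimStratum n φ < dimStratum n ψ ↔
      bettiA (diffFn φ) u = bettiB (diffFn φ) (u + 1) + 1 ∧
      bettiA (diffFn φ) (v + 2) = bettiB (diffFn φ) (v + 3)) ∧
    (dimStratum n φ < dimStratum n ψ → dimStratum n ψ = dimStratum n φ + 1) := by
  have hrel' : diffFn ψ = diffFn φ + Pi.single u 1 - Pi.single (v + 1) 1 := by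
    funext m
    simp [hrel, Pi.single_apply]
  have hs' := hrel' ▸ hψ.2.2
  have hlz' : LengthZero n φ ψ := hlz
  have hflat := fun m (hm : m ∈ Set.Icc u (v + 1)) =>
    hlz'.diffFn_eq_of_mem_Icc hφ hψ hu.le (by omega) hrel' hm
  have hsA := hφ.2.2.antitoneOn_of_add_single_sub_single hs' hu.le (by omega)
  have hdrop := hφ.2.2.apply_add_one_lt_of_add_single_sub_single hs' hu.le (by omega)
  rw [show v + 1 + 1 = v + 2 by ring] at hdrop
  have hdim := hlz'.dimStratum_eq hφ hψ hu.le (by omega) hrel'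
  rw [show v + 1 + 2 = v + 3 by ring, show v + 1 + 1 = v + 2 by ring] at hdim
  have hA := bettiA_eq_bettiB_add_one_iff (hflat (u + 1) ⟨by omega, by omega⟩)
    (hsA (Set.mem_Ici.2 le_rfl) (Set.mem_Ici.2 (by omega)) (by omega))
  have hB := bettiA_eq_bettiB_iff (l := v + 2)
    ((hflat _ ⟨by omega, by omega⟩).trans (hflat _ ⟨by omega, by omega⟩).symm)
    (by rwa [show v + 2 - 1 = v + 1 by ring])
  rw [show v + 2 + 1 = v + 3 by ring] at hB
  have hstep := hφ.2.2.le_sub_one_add_one (u - 1)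
  rw [show u - 1 - 1 = u - 2 by ring] at hstep
  have hB0 : diffFn φ (v + 3) ≤ diffFn φ (v + 2) :=
    hsA (Set.mem_Ici.2 (by omega)) (Set.mem_Ici.2 (by omega)) (by omega)
  rw [hA, hB, hdim]
  omega
end

section
/- With the notation of the tangent condition (s_ψ = s_φ + t^u − t^{v+1}, generic Betti numbers (aᵢ),(bᵢ) for φ and (ãᵢ),(b̃ᵢ) for ψ, tangent functions t_φ, t_ψ as defined from the Betti numbers): t_ψ(l) ≤ t_φ(l) for all l ∈ ℤ if and only if a_u ≠ 0 and b_{v+3} ≠ 0. -/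
set_option maxHeartbeats 4000000 in
/-- Proposition 3.3.3(2).  Let `s_ψ = s_φ + t^u - t^{v+1}` (`0 < u ≤ v`) with both
sides Castelnuovo, `φ, ψ` the corresponding Hilbert functions, and define the tangent
functions `t_φ(l) = h_𝒯(l) - (3 φ(l+1) - φ(l)) + b_{l+3}` (with `T = h_𝒯` the common
Hilbert function of the tangent bundle), and similarly `t_ψ` from `ψ`.  Then
`t_ψ(l) ≤ t_φ(l)` for all `l` if and only if `a_u ≠ 0` and `b_{v+3} ≠ 0`. -/
theorem tangent_condition_iff (s : ℤ → ℤ) (u v : ℤ) (hu : 0 < u) (huv : u ≤ v)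
    (hs : CastelnuovoZ s)
    (st : ℤ → ℤ)
    (hst : ∀ m, st m = s m + (if m = u then 1 else 0) - (if m = v + 1 then 1 else 0))
    (hs' : CastelnuovoZ st)
    (φ ψ T tφ tψ : ℤ → ℤ)
    (hφ : ∀ m, φ m = ∑ j ∈ Finset.Icc (0 : ℤ) m, s j)
    (hψ : ∀ m, ψ m = ∑ j ∈ Finset.Icc (0 : ℤ) m, st j)
    (htφ : ∀ l, tφ l = T l - (3 * φ (l + 1) - φ l) + bettiB s (l + 3))
    (htψ : ∀ l, tψ l = T l - (3 * ψ (l + 1) - ψ l) + bettiB st (l + 3)) :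
    (∀ l : ℤ, tψ l ≤ tφ l) ↔ (bettiA s u ≠ 0 ∧ bettiB s (v + 3) ≠ 0) := by
  have hsub : ∀ m : ℤ, ψ m - φ m =
      (if u ≤ m then (1:ℤ) else 0) - (if v + 1 ≤ m then 1 else 0) := by
    intro m
    rw [hφ, hψ, ← Finset.sum_sub_distrib]
    have h1 : ∀ j ∈ Finset.Icc (0:ℤ) m, st j - s j =
        ((if j = u then (1:ℤ) else 0) - (if j = v + 1 then 1 else 0)) := by
      intro j _; rw [hst]; ring
    rw [Finset.sum_congr rfl h1, Finset.sum_sub_distrib,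
      Finset.sum_ite_eq' (Finset.Icc (0:ℤ) m) u (fun _ => (1:ℤ)),
      Finset.sum_ite_eq' (Finset.Icc (0:ℤ) m) (v+1) (fun _ => (1:ℤ))]
    simp only [Finset.mem_Icc]
    split_ifs <;> omega
  have hkey : ∀ l : ℤ, (tψ l ≤ tφ l ↔ bettiB st (l+3) ≤ bettiB s (l+3) +
      (3 * ((if u ≤ l+1 then (1:ℤ) else 0) - (if v+1 ≤ l+1 then 1 else 0))
        - ((if u ≤ l then (1:ℤ) else 0) - (if v+1 ≤ l then 1 else 0)))) := by
    intro l
    rw [htφ l, htψ l]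
    have h1 := hsub (l+1)
    have h2 := hsub l
    omega
  have hE : ∀ m : ℤ, bettiDiff st m = bettiDiff s m +
      (-((if m = u then (1:ℤ) else 0) - (if m = v+1 then 1 else 0))
       + 2 * ((if m - 1 = u then (1:ℤ) else 0) - (if m - 1 = v+1 then 1 else 0))
       - ((if m - 2 = u then (1:ℤ) else 0) - (if m - 2 = v+1 then 1 else 0))) := by
    intro m
    simp only [bettiDiff, hst m, hst (m-1), hst (m-2)]
    ring
  constructor
  · intro H
    constructor
    · have h := (hkey (u-3)).mp (H (u-3))
      simp only [show (u:ℤ)-3+3 = u from by ring, show (u:ℤ)-3+1 = u-2 from by ring] at h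
      have h3 := hE u
      simp only [bettiA, bettiB] at h h3 ⊢
      clear hkey hE hsub H hst hφ hψ htφ htψ hs hs'
      split_ifs at h h3 <;> omega
    · have h := (hkey v).mp (H v)
      have h3 := hE (v+3)
      simp only [show (v:ℤ)+3-1 = v+2 from by ring, show (v:ℤ)+3-2 = v+1 from by ring] at h3
      simp only [bettiB] at h h3 ⊢
      clear hkey hE hsub H hst hφ hψ htφ htψ hs hs'
      split_ifs at h h3 <;> omega
  · rintro ⟨ha, hb⟩
    have ha' : 0 < bettiDiff s u := by simp only [bettiA] at ha; omega
    have hb' : bettiDiff s (v+3) < 0 := by simp only [bettiB] at hb; omega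
    intro l
    rw [hkey l]
    have h3 := hE (l+3)
    simp only [show (l:ℤ)+3-1 = l+2 from by ring, show (l:ℤ)+3-2 = l+1 from by ring] at h3
    simp only [bettiB]
    clear hkey hE hsub hst hφ hψ htφ htψ hs hs' ha hb
    by_cases hmu : l + 3 = u
    · obtain rfl : u = l + 3 := hmu.symm
      split_ifs at h3 ⊢ <;> omega
    · by_cases hmv : v = l
      · obtain rfl : v = l := hmv
        split_ifs at h3 ⊢ <;> omega
      · split_ifs at h3 ⊢ <;> omega
end
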